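/- arXiv:2604.13172 — 3 statements merged into one kernel-verified Lean document; each statement's English description precedes it below -/
import Mathlib

section
/- For any operator $A$ on a $D$-dimensional Hilbert space and any ensemble $\mathcal{E}$: $\|A\|_{\mathcal{E}} \le \sqrt{D\, \|\tilde\rho_{\mathcal{E}}\|_\infty}\, \|A\|$, where $\tilde\rho_{\mathcal{E}} = \mathbb{E}_{\psi\sim\mathcal{E}} \langle\psi|\psi\rangle\, |\psi\rangle\langle\psi|$, $\|\cdot\|_\infty$ is the operator norm (largest eigenvalue of the PSD operator $\tilde\rho_{\mathcal{E}}$), and $\|A\| = \sqrt{\mathrm{tr}(A^\dagger A)/D}$ is the normalized Frobenius norm. -/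
open scoped InnerProductSpace
open ContinuousLinearMap

/-!
Cauchy–Schwarz gives `|⟪ψ, A ψ⟫|² ≤ ‖ψ‖² ‖A ψ‖²`. Expanding `‖A ψ‖²` in an orthonormal basis `(e j)`
and moving `A` across the inner product,
`∑ p ‖ψ‖² ‖A ψ‖² = ∑ j, re ⟪A† e j, ρ̃ (A† e j)⟫ ≤ ‖ρ̃‖ ∑ j, ‖A† e j‖² = ‖ρ̃‖ re tr (A A†)`,
and `tr (A A†) = tr (A† A) = D ‖A‖²`.
-/

section

variable {𝕜 E ι : Type*} [RCLike 𝕜] [NormedAddCommGroup E] [InnerProductSpace 𝕜 E] [Fintype ι]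

lemma ContinuousLinearMap.re_inner_apply_self_le (T : E →L[𝕜] E) (w : E) :
    RCLike.re ⟪w, T w⟫_𝕜 ≤ ‖T‖ * ‖w‖ ^ 2 :=
  calc RCLike.re ⟪w, T w⟫_𝕜 ≤ ‖w‖ * ‖T w‖ := re_inner_le_norm _ _
    _ ≤ ‖w‖ * (‖T‖ * ‖w‖) := by gcongr; exact T.le_opNorm w
    _ = ‖T‖ * ‖w‖ ^ 2 := by ring

lemma re_inner_sum_smul_rankOne_apply (c : ι → ℝ) (ψ : ι → E) (w : E) :
    RCLike.re ⟪w, (∑ i, (c i : 𝕜) • InnerProductSpace.rankOne 𝕜 (ψ i) (ψ i)) w⟫_𝕜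
      = ∑ i, c i * ‖⟪ψ i, w⟫_𝕜‖ ^ 2 := by
  simp only [sum_apply, smul_apply, InnerProductSpace.rankOne_apply, inner_sum, inner_smul_right,
    map_sum]
  refine Finset.sum_congr rfl fun i _ => ?_
  rw [← inner_conj_symm w, RCLike.mul_conj, ← RCLike.ofReal_pow, ← RCLike.ofReal_mul,
    RCLike.ofReal_re]

lemma OrthonormalBasis.sum_sq_norm_apply_eq_re_trace [CompleteSpace E]
    (b : OrthonormalBasis ι 𝕜 E) (A : E →L[𝕜] E) :
    ∑ j, ‖A (b j)‖ ^ 2 = RCLike.re (LinearMap.trace 𝕜 E (adjoint A ∘L A : E →L[𝕜] E)) := by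
  rw [LinearMap.trace_eq_sum_inner _ b, map_sum]
  refine Finset.sum_congr rfl fun j _ => ?_
  rw [coe_coe, comp_apply, adjoint_inner_right, inner_self_eq_norm_sq]

lemma OrthonormalBasis.sum_sq_norm_adjoint_apply [CompleteSpace E]
    (b : OrthonormalBasis ι 𝕜 E) (A : E →L[𝕜] E) :
    ∑ j, ‖adjoint A (b j)‖ ^ 2 = ∑ j, ‖A (b j)‖ ^ 2 := by
  have : FiniteDimensional 𝕜 E := .of_basis b.toBasis
  rw [b.sum_sq_norm_apply_eq_re_trace, b.sum_sq_norm_apply_eq_re_trace, adjoint_adjoint,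
    toLinearMap_comp, toLinearMap_comp, LinearMap.trace_comp_comm']

lemma sum_mul_sq_norm_apply_le_norm_mul_re_trace [CompleteSpace E] [FiniteDimensional 𝕜 E]
    (c : ι → ℝ) (ψ : ι → E) (A : E →L[𝕜] E) :
    ∑ i, c i * ‖A (ψ i)‖ ^ 2
      ≤ ‖∑ i, (c i : 𝕜) • InnerProductSpace.rankOne 𝕜 (ψ i) (ψ i)‖
        * RCLike.re (LinearMap.trace 𝕜 E (adjoint A ∘L A : E →L[𝕜] E)) := by
  set ρ := ∑ i, (c i : 𝕜) • InnerProductSpace.rankOne 𝕜 (ψ i) (ψ i)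
  let b := stdOrthonormalBasis 𝕜 E
  calc ∑ i, c i * ‖A (ψ i)‖ ^ 2
      = ∑ i, ∑ j, c i * ‖⟪b j, A (ψ i)⟫_𝕜‖ ^ 2 := by
        simp_rw [← b.sum_sq_norm_inner_right (A _), Finset.mul_sum]
    _ = ∑ j, ∑ i, c i * ‖⟪ψ i, adjoint A (b j)⟫_𝕜‖ ^ 2 := by
        rw [Finset.sum_comm]
        simp only [adjoint_inner_right, norm_inner_symm (A _)]
    _ = ∑ j, RCLike.re ⟪adjoint A (b j), ρ (adjoint A (b j))⟫_𝕜 := by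
        simp only [ρ, re_inner_sum_smul_rankOne_apply]
    _ ≤ ∑ j, ‖ρ‖ * ‖adjoint A (b j)‖ ^ 2 :=
        Finset.sum_le_sum fun j _ => ρ.re_inner_apply_self_le _
    _ = ‖ρ‖ * RCLike.re (LinearMap.trace 𝕜 E (adjoint A ∘L A : E →L[𝕜] E)) := by
        rw [← Finset.mul_sum, b.sum_sq_norm_adjoint_apply, b.sum_sq_norm_apply_eq_re_trace]

end

theorem ensemble_norm_le_frobenius_general {D : ℕ} {ι : Type*} [Fintype ι]
    (p : ι → ℝ) (hp0 : ∀ i, 0 ≤ p i)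
    (ψ : ι → EuclideanSpace ℂ (Fin D))
    (A : EuclideanSpace ℂ (Fin D) →L[ℂ] EuclideanSpace ℂ (Fin D)) :
    Real.sqrt (∑ i, p i * ‖⟪ψ i, A (ψ i)⟫_ℂ‖ ^ 2)
      ≤ Real.sqrt ((D : ℝ) *
          ‖∑ i, ((p i * ‖ψ i‖ ^ 2 : ℝ) : ℂ) • ((innerSL ℂ (ψ i)).smulRight (ψ i))‖)
        * Real.sqrt
            ((LinearMap.trace ℂ (EuclideanSpace ℂ (Fin D))
              ((adjoint A ∘L A : EuclideanSpace ℂ (Fin D) →L[ℂ] EuclideanSpace ℂ (Fin D)) :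
                EuclideanSpace ℂ (Fin D) →ₗ[ℂ] EuclideanSpace ℂ (Fin D))).re / D) := by
  have cauchy_schwarz :
      ∑ i, p i * ‖⟪ψ i, A (ψ i)⟫_ℂ‖ ^ 2 ≤ ∑ i, p i * ‖ψ i‖ ^ 2 * ‖A (ψ i)‖ ^ 2 :=
    Finset.sum_le_sum fun i _ => by
      rw [mul_assoc, ← mul_pow]
      have := hp0 i
      gcongr
      exact norm_inner_le_norm _ _
  rw [← Real.sqrt_mul (by positivity)]
  refine Real.sqrt_le_sqrt (cauchy_schwarz.trans
    ((sum_mul_sq_norm_apply_le_norm_mul_re_trace (fun i => p i * ‖ψ i‖ ^ 2) ψ A).trans_eq ?_))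
  rw [mul_comm (D : ℝ), mul_assoc, mul_div_cancel_of_imp' fun hD => ?_]
  · -- `rankOne` and `RCLike.re` unfold to the statement's `smulRight` and `Complex.re`.
    rfl
  -- The junk value `T / 0 = 0` is harmless: for `D = 0` the trace is an empty sum.
  obtain rfl : D = 0 := by exact_mod_cast hD
  simpa using ((EuclideanSpace.basisFun (Fin 0) ℂ).sum_sq_norm_apply_eq_re_trace A).symm

/-- `‖A‖_𝓔 ≤ sqrt (D ‖ρ̃_𝓔‖_∞) ‖A‖`, where `ρ̃_𝓔 = 𝔼_ψ ⟨ψ|ψ⟩ |ψ⟩⟨ψ|`,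
`‖·‖_∞` is the operator norm, and `‖A‖² = tr(A†A)/D` is the normalized
Frobenius norm. -/
theorem ensemble_norm_le_frobenius {D : ℕ} {ι : Type*} [Fintype ι]
    (p : ι → ℝ) (hp0 : ∀ i, 0 ≤ p i) (hp1 : ∑ i, p i = 1)
    (ψ : ι → EuclideanSpace ℂ (Fin D))
    (A : EuclideanSpace ℂ (Fin D) →L[ℂ] EuclideanSpace ℂ (Fin D)) :
    Real.sqrt (∑ i, p i * ‖⟪ψ i, A (ψ i)⟫_ℂ‖ ^ 2)
      ≤ Real.sqrt ((D : ℝ) *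
          ‖∑ i, ((p i * ‖ψ i‖ ^ 2 : ℝ) : ℂ) • ((innerSL ℂ (ψ i)).smulRight (ψ i))‖)
        * Real.sqrt
            ((LinearMap.trace ℂ (EuclideanSpace ℂ (Fin D))
              ((adjoint A ∘L A : EuclideanSpace ℂ (Fin D) →L[ℂ] EuclideanSpace ℂ (Fin D)) :
                EuclideanSpace ℂ (Fin D) →ₗ[ℂ] EuclideanSpace ℂ (Fin D))).re / D) :=
  ensemble_norm_le_frobenius_general p hp0 ψ A
end

section
/- Let $\Lambda > 0$, $\tau > 0$, and let $O = \sum_\lambda O_\lambda$ be a decomposition into pairwise Hilbert–Schmidt-orthogonal eigenoperators of $\mathrm{ad}_H$ with $|\lambda| \le \Lambda$ for all $\lambda$. Let $\|\cdot\|_{\mathcal{E}}$ be a seminorm induced by a positive-semidefinite Hermitian form, and suppose $\|B\|_{\mathcal{E}}^2 \le \nu \|B\|^2$ for every operator $B$ of the form $B = \sum_{|\lambda-\mu|\le 1/\tau} O_\lambda$ ($\mu \in \mathbb{R}$). Then $\|O\|_{\mathcal{E}}^2 \le \nu(\Lambda \tau + 1)\|O\|^2$. -/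
/-!
Split the eigenvalues greedily into `n ≤ ⌊Λτ⌋ + 1` windows `B_μ` of width `2/τ` over pairwise
disjoint sets of eigenvalues, so that `O = ∑_μ B_μ`. The seminorm of a positive semidefinite
Hermitian form satisfies the triangle inequality, so Cauchy–Schwarz over the windows gives
`‖O‖_𝓔² ≤ n ∑_μ ‖B_μ‖_𝓔² ≤ ν n ∑_μ ‖B_μ‖²`; the last sum is `‖O‖²` because windows over
disjoint sets of eigenvalues are Hilbert–Schmidt orthogonal.
-/

open Finset ContinuousLinearMap

namespace PreInnerProductSpace.Core

variable {𝕜 V : Type*} [RCLike 𝕜] [AddCommGroup V] [Module 𝕜 V]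

@[reducible]
def ofRight (form : V → V → 𝕜) (symm : ∀ x y, form x y = starRingEnd 𝕜 (form y x))
    (add_right : ∀ x y z, form x (y + z) = form x y + form x z)
    (smul_right : ∀ (r : 𝕜) x y, form x (r • y) = r * form x y)
    (nonneg : ∀ x, 0 ≤ RCLike.re (form x x)) : PreInnerProductSpace.Core 𝕜 V where
  inner := form
  conj_inner_symm x y := (symm x y).symm
  re_inner_nonneg := nonneg
  add_left x y z := by rw [symm, add_right, map_add, ← symm, ← symm]
  smul_left x y r := by rw [symm, smul_right, map_mul, ← symm]

theorem re_inner_sum_self_le (c : PreInnerProductSpace.Core 𝕜 V) {κ : Type*} (M : Finset κ)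
    (B : κ → V) (f : κ → ℝ) {ν N : ℝ} (hN : (#M : ℝ) ≤ N)
    (hB : ∀ k ∈ M, RCLike.re (c.inner (B k) (B k)) ≤ ν * f k) :
    RCLike.re (c.inner (∑ k ∈ M, B k) (∑ k ∈ M, B k)) ≤ ν * N * ∑ k ∈ M, f k := by
  let := c
  let : SeminormedAddCommGroup V := InnerProductSpace.Core.toSeminormedAddCommGroup (𝕜 := 𝕜)
  have hnorm (x : V) : RCLike.re (c.inner x x) = ‖x‖ ^ 2 := by
    rw [sq, ← InnerProductSpace.Core.inner_self_eq_norm_mul_norm]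
  have hsq : ∑ k ∈ M, ‖B k‖ ^ 2 ≤ ∑ k ∈ M, ν * f k :=
    sum_le_sum fun k hk => hnorm (B k) ▸ hB k hk
  calc RCLike.re (c.inner (∑ k ∈ M, B k) (∑ k ∈ M, B k))
      = ‖∑ k ∈ M, B k‖ ^ 2 := hnorm _
    _ ≤ (∑ k ∈ M, ‖B k‖) ^ 2 := by gcongr; exact norm_sum_le M B
    _ ≤ #M * ∑ k ∈ M, ‖B k‖ ^ 2 := sq_sum_le_card_mul_sum_sq
    _ ≤ N * ∑ k ∈ M, ‖B k‖ ^ 2 := by gcongr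
    _ ≤ N * ∑ k ∈ M, ν * f k := by gcongr; exact (Nat.cast_nonneg _).trans hN
    _ = ν * N * ∑ k ∈ M, f k := by rw [← mul_sum]; ring

end PreInnerProductSpace.Core

section SpectralWindow

variable {ι : Type*} [Fintype ι]

noncomputable def spectralWindow (lam : ι → ℝ) (r μ : ℝ) : Finset ι :=
  univ.filter fun i => |lam i - μ| ≤ r

/- Closed windows on a fixed grid would share endpoints; starting each window at the least
eigenvalue not yet covered keeps them disjoint. -/
theorem exists_spectralWindow_cover [DecidableEq ι] (lam : ι → ℝ) {r : ℝ} (hr : 0 ≤ r)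
    (n : ℕ) (c : ℝ) (hlam : ∀ i, c < lam i → lam i ≤ c + n * (2 * r)) :
    ∃ M : Finset ℝ, #M ≤ n ∧ (M : Set ℝ).PairwiseDisjoint (spectralWindow lam r) ∧
      M.biUnion (spectralWindow lam r) = univ.filter fun i => c < lam i := by
  induction n generalizing c with
  | zero =>
    refine ⟨∅, by simp, by simp, ?_⟩
    symm
    simp only [biUnion_empty, filter_eq_empty_iff, mem_univ, true_implies, not_lt]
    intro i
    by_contra! h
    simpa using (hlam i h).trans_lt' h
  | succ n ih =>
    obtain hempty | ⟨i₀, hi₀, hmin⟩ :=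
      (univ.filter fun i => c < lam i).eq_empty_or_nonempty.imp id
        fun h => exists_min_image _ lam h
    · exact ⟨∅, by simp, by simp, hempty.symm ▸ biUnion_empty⟩
    simp only [mem_filter, mem_univ, true_and] at hi₀ hmin
    obtain ⟨M, hcard, hdisj, hcover⟩ := ih (lam i₀ + 2 * r) fun i hi => by
      have := hlam i (by linarith [hmin i (by linarith)]); push_cast at this; linarith
    have hfirst : ∀ i ∈ spectralWindow lam r (lam i₀ + r), lam i ≤ lam i₀ + 2 * r := by
      intro i hi
      simp only [spectralWindow, mem_filter, mem_univ, true_and, abs_le] at hi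
      linarith
    refine ⟨insert (lam i₀ + r) M, card_insert_le _ _ |>.trans (by omega), ?_, ?_⟩
    · rw [coe_insert]
      refine hdisj.insert fun μ hμ _ => disjoint_left.mpr fun i hi hi' => ?_
      have : i ∈ M.biUnion (spectralWindow lam r) := mem_biUnion.mpr ⟨μ, hμ, hi'⟩
      rw [hcover, mem_filter] at this
      linarith [hfirst i hi, this.2]
    · ext i
      simp only [biUnion_insert, mem_union, hcover, spectralWindow, mem_filter, mem_univ,
        true_and, abs_le]
      constructor
      · rintro (⟨h, -⟩ | h) <;> linarith
      · intro h
        by_cases h' : lam i ≤ lam i₀ + 2 * r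
        · left; constructor <;> linarith [hmin i h]
        · right; linarith

end SpectralWindow

section HilbertSchmidt

variable {𝕜 E : Type*} [RCLike 𝕜] [NormedAddCommGroup E] [InnerProductSpace 𝕜 E]
  [CompleteSpace E]

noncomputable def hilbertSchmidtInner (A B : E →L[𝕜] E) : 𝕜 :=
  LinearMap.trace 𝕜 E (adjoint A ∘L B : E →L[𝕜] E)

theorem hilbertSchmidtInner_sum_sum {κ κ' : Type*} (s : Finset κ) (t : Finset κ')
    (A : κ → E →L[𝕜] E) (B : κ' → E →L[𝕜] E) :
    hilbertSchmidtInner (∑ k ∈ s, A k) (∑ l ∈ t, B l) =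
      ∑ k ∈ s, ∑ l ∈ t, hilbertSchmidtInner (A k) (B l) := by
  rw [hilbertSchmidtInner, map_sum adjoint, finsetSum_comp, toLinearMap_sum, map_sum]
  refine sum_congr rfl fun k _ => ?_
  rw [comp_finsetSum, toLinearMap_sum, map_sum]
  rfl

theorem hilbertSchmidtInner_sum_sum_eq_zero_of_disjoint {κ : Type*} {s t : Finset κ}
    (hst : Disjoint s t) {O : κ → E →L[𝕜] E}
    (horth : ∀ i j, i ≠ j → hilbertSchmidtInner (O i) (O j) = 0) :
    hilbertSchmidtInner (∑ i ∈ s, O i) (∑ j ∈ t, O j) = 0 := by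
  rw [hilbertSchmidtInner_sum_sum]
  exact sum_eq_zero fun i hi => sum_eq_zero fun j hj =>
    horth i j fun h => disjoint_left.mp hst hi (h ▸ hj)

theorem hilbertSchmidtInner_sum_self_of_orthogonal {κ : Type*} (M : Finset κ)
    (X : κ → E →L[𝕜] E)
    (horth : ∀ k ∈ M, ∀ l ∈ M, k ≠ l → hilbertSchmidtInner (X k) (X l) = 0) :
    hilbertSchmidtInner (∑ k ∈ M, X k) (∑ k ∈ M, X k) =
      ∑ k ∈ M, hilbertSchmidtInner (X k) (X k) := by
  rw [hilbertSchmidtInner_sum_sum]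
  exact sum_congr rfl fun k hk =>
    sum_eq_single_of_mem k hk fun l hl hlk => horth k hk l hl hlk.symm

end HilbertSchmidt

theorem nu_lower_bound_general {D : ℕ} {ι : Type*} [Fintype ι]
    (lam : ι → ℝ)
    (O : ι → (EuclideanSpace ℂ (Fin D) →L[ℂ] EuclideanSpace ℂ (Fin D)))
    (horth : ∀ i j, i ≠ j →
      LinearMap.trace ℂ (EuclideanSpace ℂ (Fin D))
        ((adjoint (O i) ∘L O j :
            EuclideanSpace ℂ (Fin D) →L[ℂ] EuclideanSpace ℂ (Fin D)) :
          EuclideanSpace ℂ (Fin D) →ₗ[ℂ] EuclideanSpace ℂ (Fin D)) = 0)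
    (Λ τ ν : ℝ) (hΛ : 0 < Λ) (hτ : 0 < τ)
    (hspec : ∀ i, |lam i| ≤ Λ)
    (innerE : (EuclideanSpace ℂ (Fin D) →L[ℂ] EuclideanSpace ℂ (Fin D)) →
      (EuclideanSpace ℂ (Fin D) →L[ℂ] EuclideanSpace ℂ (Fin D)) → ℂ)
    (hsymm : ∀ A B, innerE A B = starRingEnd ℂ (innerE B A))
    (haddr : ∀ A B C, innerE A (B + C) = innerE A B + innerE A C)
    (hsmulr : ∀ (c : ℂ) A B, innerE A (c • B) = c * innerE A B)
    (hpos : ∀ A, 0 ≤ (innerE A A).re)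
    (hwindow : ∀ μ : ℝ,
      (innerE (∑ i ∈ Finset.univ.filter (fun i => |lam i - μ| ≤ 1 / τ), O i)
          (∑ i ∈ Finset.univ.filter (fun i => |lam i - μ| ≤ 1 / τ), O i)).re
        ≤ ν * (LinearMap.trace ℂ (EuclideanSpace ℂ (Fin D))
            ((adjoint (∑ i ∈ Finset.univ.filter (fun i => |lam i - μ| ≤ 1 / τ), O i)
                ∘L (∑ i ∈ Finset.univ.filter (fun i => |lam i - μ| ≤ 1 / τ), O i) :
              EuclideanSpace ℂ (Fin D) →L[ℂ] EuclideanSpace ℂ (Fin D)) :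
              EuclideanSpace ℂ (Fin D) →ₗ[ℂ] EuclideanSpace ℂ (Fin D))).re) :
    (innerE (∑ i, O i) (∑ i, O i)).re
      ≤ ν * (Λ * τ + 1) *
        (LinearMap.trace ℂ (EuclideanSpace ℂ (Fin D))
          ((adjoint (∑ i, O i) ∘L (∑ i, O i) :
              EuclideanSpace ℂ (Fin D) →L[ℂ] EuclideanSpace ℂ (Fin D)) :
            EuclideanSpace ℂ (Fin D) →ₗ[ℂ] EuclideanSpace ℂ (Fin D))).re := by
  classical
  set n := ⌊Λ * τ⌋₊ + 1
  have hcount : (n : ℝ) ≤ Λ * τ + 1 := by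
    push_cast [n]; linarith [Nat.floor_le (by positivity : 0 ≤ Λ * τ)]
  have hwidth : Λ < n / τ := by
    rw [lt_div_iff₀ hτ]; push_cast [n]; exact Nat.lt_floor_add_one _
  set c := Λ - n * (2 * (1 / τ))
  have hc : c < -Λ := by
    have : n * (2 * (1 / τ)) = 2 * (n / τ) := by ring
    linarith
  obtain ⟨M, hcard, hdisj, hcover⟩ :=
    exists_spectralWindow_cover lam (by positivity : (0 : ℝ) ≤ 1 / τ) n c
      fun i _ => by linarith [(abs_le.mp (hspec i)).2]
  rw [filter_true_of_mem fun i _ => hc.trans_le (abs_le.mp (hspec i)).1] at hcover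
  let B (μ : ℝ) := ∑ i ∈ spectralWindow lam (1 / τ) μ, O i
  have hO : ∑ i, O i = ∑ μ ∈ M, B μ := by rw [← sum_biUnion hdisj, hcover]
  have hpyth : hilbertSchmidtInner (∑ μ ∈ M, B μ) (∑ μ ∈ M, B μ) =
      ∑ μ ∈ M, hilbertSchmidtInner (B μ) (B μ) :=
    hilbertSchmidtInner_sum_self_of_orthogonal M B fun μ hμ μ' hμ' hne =>
      hilbertSchmidtInner_sum_sum_eq_zero_of_disjoint (hdisj hμ hμ' hne) horth
  calc (innerE (∑ i, O i) (∑ i, O i)).re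
      = (innerE (∑ μ ∈ M, B μ) (∑ μ ∈ M, B μ)).re := by rw [hO]
    _ ≤ ν * (Λ * τ + 1) * ∑ μ ∈ M, (hilbertSchmidtInner (B μ) (B μ)).re :=
      (PreInnerProductSpace.Core.ofRight innerE hsymm haddr hsmulr hpos).re_inner_sum_self_le M B
        _ ((Nat.cast_le.mpr hcard).trans hcount) fun μ _ => hwindow μ
    _ = ν * (Λ * τ + 1) * (hilbertSchmidtInner (∑ i, O i) (∑ i, O i)).re := by
      rw [hO, hpyth, Complex.re_sum]

/-- Lower bound on `ν(τ)`: if `O = ∑_λ O_λ` is a decomposition into pairwise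
Hilbert–Schmidt-orthogonal eigenoperators of `ad_H` with `|λ| ≤ Λ`, and
`⟨·,·⟩_𝓔` is a positive-semidefinite Hermitian form whose induced seminorm
satisfies `‖B_μ‖_𝓔² ≤ ν ‖B_μ‖²` for every energy-window operator
`B_μ = ∑_{|λ-μ| ≤ 1/τ} O_λ`, then `‖O‖_𝓔² ≤ ν (Λτ + 1) ‖O‖²`
(Frobenius norms via `‖X‖² = tr(X†X)`). -/
theorem nu_lower_bound {D : ℕ} {ι : Type*} [Fintype ι]
    (H : EuclideanSpace ℂ (Fin D) →L[ℂ] EuclideanSpace ℂ (Fin D))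
    (hH : adjoint H = H)
    (lam : ι → ℝ)
    (O : ι → (EuclideanSpace ℂ (Fin D) →L[ℂ] EuclideanSpace ℂ (Fin D)))
    (heig : ∀ i, H ∘L O i - O i ∘L H = ((lam i : ℝ) : ℂ) • O i)
    (horth : ∀ i j, i ≠ j →
      LinearMap.trace ℂ (EuclideanSpace ℂ (Fin D))
        ((adjoint (O i) ∘L O j :
            EuclideanSpace ℂ (Fin D) →L[ℂ] EuclideanSpace ℂ (Fin D)) :
          EuclideanSpace ℂ (Fin D) →ₗ[ℂ] EuclideanSpace ℂ (Fin D)) = 0)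
    (Λ τ ν : ℝ) (hΛ : 0 < Λ) (hτ : 0 < τ)
    (hspec : ∀ i, |lam i| ≤ Λ)
    (innerE : (EuclideanSpace ℂ (Fin D) →L[ℂ] EuclideanSpace ℂ (Fin D)) →
      (EuclideanSpace ℂ (Fin D) →L[ℂ] EuclideanSpace ℂ (Fin D)) → ℂ)
    (hsymm : ∀ A B, innerE A B = starRingEnd ℂ (innerE B A))
    (haddr : ∀ A B C, innerE A (B + C) = innerE A B + innerE A C)
    (hsmulr : ∀ (c : ℂ) A B, innerE A (c • B) = c * innerE A B)
    (hpos : ∀ A, 0 ≤ (innerE A A).re)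
    (hwindow : ∀ μ : ℝ,
      (innerE (∑ i ∈ Finset.univ.filter (fun i => |lam i - μ| ≤ 1 / τ), O i)
          (∑ i ∈ Finset.univ.filter (fun i => |lam i - μ| ≤ 1 / τ), O i)).re
        ≤ ν * (LinearMap.trace ℂ (EuclideanSpace ℂ (Fin D))
            ((adjoint (∑ i ∈ Finset.univ.filter (fun i => |lam i - μ| ≤ 1 / τ), O i)
                ∘L (∑ i ∈ Finset.univ.filter (fun i => |lam i - μ| ≤ 1 / τ), O i) :
              EuclideanSpace ℂ (Fin D) →L[ℂ] EuclideanSpace ℂ (Fin D)) :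
              EuclideanSpace ℂ (Fin D) →ₗ[ℂ] EuclideanSpace ℂ (Fin D))).re) :
    (innerE (∑ i, O i) (∑ i, O i)).re
      ≤ ν * (Λ * τ + 1) *
        (LinearMap.trace ℂ (EuclideanSpace ℂ (Fin D))
          ((adjoint (∑ i, O i) ∘L (∑ i, O i) :
              EuclideanSpace ℂ (Fin D) →L[ℂ] EuclideanSpace ℂ (Fin D)) :
            EuclideanSpace ℂ (Fin D) →ₗ[ℂ] EuclideanSpace ℂ (Fin D))).re :=
  nu_lower_bound_general lam O horth Λ τ ν hΛ hτ hspec innerE hsymm haddr hsmulr hpos hwindow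
end

section
/- Let $A, B$ be Hermitian operators on a finite-dimensional complex Hilbert space. Then the joint numerical range $W(A,B) = \{(\langle v, Av\rangle, \langle v, Bv\rangle) : \|v\| = 1\} \subseteq \mathbb{R}^2$ is a convex subset of the plane, provided the Hilbert space dimension is at least 3 (Brickman's theorem). -/
/-!
Let `P = f x` and `Q = f y` be the images of unit vectors, where `f v = (re ⟪v, A v⟫, re ⟪v, B v⟫)`.
On the unit sphere, `f v` lies on the line through `P` and `Q` exactly when `re ⟪v, C v⟫ = 0` for
the operator `C = d₁ B - d₂ A - (d₁ P₂ - d₂ P₁)`, where `d = Q - P`; in particular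
`re ⟪x, C x⟫ = re ⟪y, C y⟫ = 0`. Multiplying `y` by a suitable phase `u` makes the real part of the
cross term vanish, so `re ⟪v, C v⟫ = 0` on the whole real span of `x` and `u y`; as `-u` works as
well, we may take `u y ≠ -x`, so that the segment from `x` to `u y` avoids `0`. Normalising it
gives a path on the sphere whose image under `f` is a connected subset of that line containing
`P` and `Q`, hence containing the segment `[P, Q]`.
-/

open scoped InnerProductSpace ComplexConjugate
open Set

theorem segment_subset_of_isPreconnected_of_cross_eq_zero {S : Set (ℝ × ℝ)} {P Q : ℝ × ℝ}
    (hS : IsPreconnected S) (hP : P ∈ S) (hQ : Q ∈ S)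
    (hline : ∀ X ∈ S, (Q - P).1 * (X - P).2 - (Q - P).2 * (X - P).1 = 0) :
    segment ℝ P Q ⊆ S := by
  rcases eq_or_ne P Q with rfl | hPQ
  · simpa [segment_same] using hP
  rw [segment_eq_image']
  rintro _ ⟨s, hs, rfl⟩
  set d := Q - P with hd
  have hd_pos : 0 < d.1 ^ 2 + d.2 ^ 2 := by
    have : d ≠ 0 := sub_ne_zero.mpr hPQ.symm
    rcases ne_or_eq d.1 0 with h | h
    · positivity
    · have : d.2 ≠ 0 := fun h' => this (Prod.ext h h')
      positivity
  obtain ⟨X, hXS, hX⟩ : s * (d.1 ^ 2 + d.2 ^ 2) ∈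
      (fun X : ℝ × ℝ => d.1 * (X - P).1 + d.2 * (X - P).2) '' S := by
    refine hS.intermediate_value hP hQ (by fun_prop : Continuous _).continuousOn ⟨?_, ?_⟩
    · simpa using mul_nonneg hs.1 hd_pos.le
    · simp only [← hd]
      nlinarith [hs.2]
  have hcross := hline X hXS
  convert hXS using 1
  -- `X - P` and `s • d` have the same components along and across `d`
  refine Prod.ext (mul_left_cancel₀ hd_pos.ne' ?_) (mul_left_cancel₀ hd_pos.ne' ?_)
  · simp only [Prod.fst_add, Prod.smul_fst, smul_eq_mul, Prod.fst_sub] at hX hcross ⊢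
    linear_combination -d.1 * hX + d.2 * hcross
  · simp only [Prod.snd_add, Prod.smul_snd, smul_eq_mul, Prod.snd_sub] at hX hcross ⊢
    linear_combination -d.2 * hX - d.1 * hcross

theorem zero_notMem_segment_of_norm_eq {F : Type*} [NormedAddCommGroup F] [NormedSpace ℝ F]
    {x y : F} (hxy : ‖x‖ = ‖y‖) (hy : y ≠ -x) : (0 : F) ∉ segment ℝ x y := by
  rw [mem_segment_iff_sameRay, zero_sub, sub_zero]
  exact fun h => hy (h.eq_of_norm_eq (by rw [norm_neg, hxy])).symm

theorem exists_path_sphere_span_pair {F : Type*} [NormedAddCommGroup F] [NormedSpace ℝ F]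
    {x y : F} (hx : ‖x‖ = 1) (hy : ‖y‖ = 1) (hxy : y ≠ -x) :
    ∃ γ : ℝ → F, ContinuousOn γ (Icc 0 1) ∧ γ 0 = x ∧ γ 1 = y ∧
      ∀ t ∈ Icc (0 : ℝ) 1, ‖γ t‖ = 1 ∧ γ t ∈ Submodule.span ℝ {x, y} := by
  set v : ℝ → F := fun t => (1 - t) • x + t • y
  have hv : ∀ t ∈ Icc (0 : ℝ) 1, v t ≠ 0 := fun t ht h0 =>
    zero_notMem_segment_of_norm_eq (hx.trans hy.symm) hxy
      ⟨1 - t, t, by linarith [ht.2], ht.1, by ring, h0⟩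
  refine ⟨fun t => ‖v t‖⁻¹ • v t, ?_, by simp [v, hx], by simp [v, hy], fun t ht => ⟨?_, ?_⟩⟩
  · have hvc : Continuous v := by fun_prop
    exact ((hvc.norm.continuousOn).inv₀ fun t ht => norm_ne_zero_iff.mpr (hv t ht)).smul
      hvc.continuousOn
  · exact norm_smul_inv_norm (hv t ht)
  · exact Submodule.mem_span_pair.mpr
      ⟨‖v t‖⁻¹ * (1 - t), ‖v t‖⁻¹ * t, by simp only [v, smul_add, smul_smul]⟩

theorem Complex.exists_norm_eq_one_re_mul_eq_zero (z : ℂ) : ∃ u : ℂ, ‖u‖ = 1 ∧ (u * z).re = 0 := by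
  set w := Complex.exp (z.arg * Complex.I)
  have hz : z = ‖z‖ * w := (Complex.norm_mul_exp_arg_mul_I z).symm
  have hw : w ≠ 0 := Complex.exp_ne_zero _
  refine ⟨Complex.I * w⁻¹, ?_, ?_⟩
  · rw [norm_mul, norm_inv, Complex.norm_I, Complex.norm_exp_ofReal_mul_I, inv_one, one_mul]
  · have huz : Complex.I * w⁻¹ * z = Complex.I * ‖z‖ := by
      conv_lhs => rw [hz]
      field_simp
    simp [huz]

section

variable {E : Type*} [NormedAddCommGroup E] [InnerProductSpace ℂ E]

theorem re_inner_add_map_add (T : E →ₗ[ℂ] E) (x y : E) :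
    (⟪x + y, T (x + y)⟫_ℂ).re =
      (⟪x, T x⟫_ℂ).re + (⟪y, T y⟫_ℂ).re + (⟪x, T y⟫_ℂ + conj ⟪y, T x⟫_ℂ).re := by
  simp only [map_add, inner_add_left, inner_add_right, Complex.add_re, Complex.conj_re]
  ring

theorem inner_smul_map_smul (T : E →ₗ[ℂ] E) (u : ℂ) (x : E) :
    ⟪u • x, T (u • x)⟫_ℂ = (‖u‖ ^ 2 : ℝ) * ⟪x, T x⟫_ℂ := by
  rw [map_smul, inner_smul_left, inner_smul_right, ← mul_assoc, Complex.conj_mul',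
    Complex.ofReal_pow]

theorem exists_norm_eq_one_forall_re_inner_eq_zero (T : E →ₗ[ℂ] E) {x y : E} (hx0 : x ≠ 0)
    (hx : (⟪x, T x⟫_ℂ).re = 0) (hy : (⟪y, T y⟫_ℂ).re = 0) :
    ∃ u : ℂ, ‖u‖ = 1 ∧ u • y ≠ -x ∧
      ∀ s t : ℝ, (⟪s • x + t • u • y, T (s • x + t • u • y)⟫_ℂ).re = 0 := by
  set z := ⟪x, T y⟫_ℂ + conj ⟪y, T x⟫_ℂ
  have hplane : ∀ u : ℂ, ‖u‖ = 1 → (u * z).re = 0 →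
      ∀ s t : ℝ, (⟪s • x + t • u • y, T (s • x + t • u • y)⟫_ℂ).re = 0 := by
    intro u hu huz s t
    have hcross : ⟪(s : ℂ) • x, T ((t : ℂ) • u • y)⟫_ℂ + conj ⟪(t : ℂ) • u • y, T ((s : ℂ) • x)⟫_ℂ
        = (s * t : ℝ) * (u * z) := by
      simp only [map_smul, inner_smul_left, inner_smul_right, map_mul, Complex.conj_conj,
        Complex.conj_ofReal, z]
      push_cast
      ring
    rw [← Complex.coe_smul, ← Complex.coe_smul, re_inner_add_map_add, hcross,
      inner_smul_map_smul, inner_smul_map_smul, inner_smul_map_smul, hu]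
    simp only [Complex.re_ofReal_mul, hx, hy, huz, mul_zero, add_zero]
  obtain ⟨u, hu, huz⟩ := z.exists_norm_eq_one_re_mul_eq_zero
  by_cases huy : u • y = -x
  · refine ⟨-u, by rwa [norm_neg], ?_, hplane (-u) (by rwa [norm_neg]) (by simp [huz])⟩
    rw [neg_smul, huy, neg_neg]
    intro hx_neg
    have h2x : (2 : ℂ) • x = 0 := by rw [two_smul]; nth_rewrite 2 [hx_neg]; exact add_neg_cancel x
    exact hx0 ((smul_eq_zero.mp h2x).resolve_left two_ne_zero)
  · exact ⟨u, hu, huy, hplane u hu huz⟩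

noncomputable def jointQuadraticMap (A B : E →L[ℂ] E) (v : E) : ℝ × ℝ :=
  ((⟪v, A v⟫_ℂ).re, (⟪v, B v⟫_ℂ).re)

def jointNumericalRange (A B : E →L[ℂ] E) : Set (ℝ × ℝ) :=
  jointQuadraticMap A B '' Metric.sphere 0 1

theorem jointQuadraticMap_smul (A B : E →L[ℂ] E) {u : ℂ} (hu : ‖u‖ = 1) (v : E) :
    jointQuadraticMap A B (u • v) = jointQuadraticMap A B v := by
  simp only [jointQuadraticMap, ← ContinuousLinearMap.coe_coe A, ← ContinuousLinearMap.coe_coe B,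
    inner_smul_map_smul, hu, one_pow, Complex.ofReal_one, one_mul]

theorem segment_subset_jointNumericalRange (A B : E →L[ℂ] E) {x y : E} (hx : ‖x‖ = 1)
    (hy : ‖y‖ = 1) :
    segment ℝ (jointQuadraticMap A B x) (jointQuadraticMap A B y) ⊆ jointNumericalRange A B := by
  set f := jointQuadraticMap A B
  set P := f x
  set d := f y - P
  let C : E →ₗ[ℂ] E := (d.1 : ℂ) • (B : E →ₗ[ℂ] E) - (d.2 : ℂ) • (A : E →ₗ[ℂ] E) -
    ((d.1 * P.2 - d.2 * P.1 : ℝ) : ℂ) • LinearMap.id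
  have hC : ∀ v, ‖v‖ = 1 → (⟪v, C v⟫_ℂ).re = d.1 * (f v - P).2 - d.2 * (f v - P).1 := by
    intro v hv
    simp only [C, LinearMap.sub_apply, LinearMap.smul_apply, ContinuousLinearMap.coe_coe,
      LinearMap.id_apply, inner_sub_right, inner_smul_right, inner_self_eq_norm_sq_to_K, hv,
      RCLike.ofReal_one, one_pow, mul_one, Complex.sub_re, Complex.re_ofReal_mul, Complex.ofReal_re,
      f, jointQuadraticMap, Prod.fst_sub, Prod.snd_sub]
    ring
  have hx0 : x ≠ 0 := norm_ne_zero_iff.mp (by rw [hx]; exact one_ne_zero)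
  obtain ⟨u, hu, huy, hplane⟩ := exists_norm_eq_one_forall_re_inner_eq_zero C hx0
    (by rw [hC x hx]; simp [P]) (by rw [hC y hy]; ring)
  obtain ⟨γ, hγc, hγ0, hγ1, hγ⟩ :=
    exists_path_sphere_span_pair hx (by rw [norm_smul, hu, hy, one_mul]) huy
  have hf : Continuous f := by unfold f jointQuadraticMap; fun_prop
  refine (segment_subset_of_isPreconnected_of_cross_eq_zero (S := f '' (γ '' Icc 0 1))
    ((isPreconnected_Icc.image γ hγc).image f hf.continuousOn)
    ⟨x, ⟨0, by simp, hγ0⟩, rfl⟩ ⟨u • y, ⟨1, by simp, hγ1⟩, jointQuadraticMap_smul A B hu y⟩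
    ?_).trans ?_
  · rintro _ ⟨_, ⟨t, ht, rfl⟩, rfl⟩
    obtain ⟨hnorm, hspan⟩ := hγ t ht
    obtain ⟨a, b, hab⟩ := Submodule.mem_span_pair.mp hspan
    rw [← hC _ hnorm, ← hab]
    exact hplane a b
  · rintro _ ⟨_, ⟨t, ht, rfl⟩, rfl⟩
    exact ⟨γ t, mem_sphere_zero_iff_norm.mpr (hγ t ht).1, rfl⟩

theorem convex_jointNumericalRange (A B : E →L[ℂ] E) : Convex ℝ (jointNumericalRange A B) := by
  rw [convex_iff_segment_subset]
  rintro _ ⟨x, hx, rfl⟩ _ ⟨y, hy, rfl⟩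
  exact segment_subset_jointNumericalRange A B (mem_sphere_zero_iff_norm.mp hx)
    (mem_sphere_zero_iff_norm.mp hy)

end

open ContinuousLinearMap

theorem joint_numerical_range_convex_general {D : ℕ}
    (A B : EuclideanSpace ℂ (Fin D) →L[ℂ] EuclideanSpace ℂ (Fin D)) :
    Convex ℝ {x : ℝ × ℝ | ∃ v : EuclideanSpace ℂ (Fin D), ‖v‖ = 1 ∧
      x = ((⟪v, A v⟫_ℂ).re, (⟪v, B v⟫_ℂ).re)} := by
  convert convex_jointNumericalRange A B using 1
  ext
  simp [jointNumericalRange, jointQuadraticMap, eq_comm]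

/-- Brickman's theorem: for Hermitian operators `A, B` on a complex Hilbert
space of dimension at least 3, the joint numerical range
`W(A,B) = {(⟨v,Av⟩, ⟨v,Bv⟩) : ‖v‖ = 1} ⊆ ℝ²` is convex. -/
theorem joint_numerical_range_convex {D : ℕ} (hD : 3 ≤ D)
    (A B : EuclideanSpace ℂ (Fin D) →L[ℂ] EuclideanSpace ℂ (Fin D))
    (hA : adjoint A = A) (hB : adjoint B = B) :
    Convex ℝ {x : ℝ × ℝ | ∃ v : EuclideanSpace ℂ (Fin D), ‖v‖ = 1 ∧
      x = ((⟪v, A v⟫_ℂ).re, (⟪v, B v⟫_ℂ).re)} :=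
  joint_numerical_range_convex_general A B
end
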